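/- arXiv:math-ph/9903023 — 5 statements merged into one kernel-verified Lean document; each statement's English description precedes it below -/
import Mathlib

section
/- Suppose q and q̄ are continuous real-valued functions on [0, ε₁] satisfying q(z)² = -2∫₀¹ t q(zt) dt + 2 - 2z + z²/2 (and likewise for q̄), and suppose there are M₁ > 0, ε₁ > 0 with M₁ε₁ < 2/3 such that |q(z) - 1| ≤ M₁ z and |q̄(z) - 1| ≤ M₁ z for 0 ≤ z ≤ ε₁. Then |q(z) - q̄(z)| ≤ 2 M₁ γ₁ⁿ |z| for all integers n > 0 and 0 ≤ z ≤ ε₁, where γ₁ = 1/(3(1 - M₁ε₁)). -/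
/-!
Subtracting the two equations gives
`(q z - q̄ z) (q z + q̄ z) = -2 ∫₀¹ t (q - q̄)(z t) dt`, and `q z + q̄ z ≥ 2 (1 - M₁ ε₁)`.
Hence a bound `|q w - q̄ w| ≤ C w` on `[0, ε₁]` improves to `|q w - q̄ w| ≤ γ₁ C w`, since
`∫₀¹ t · C z t dt = C z / 3`. Starting from `C = 2 M₁` and iterating gives the claim.
-/

open Set intervalIntegral

lemma mul_mem_Icc_zero {ε z t : ℝ} (hz : z ∈ Icc 0 ε) (ht : t ∈ Icc (0 : ℝ) 1) :
    z * t ∈ Icc 0 ε :=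
  ⟨mul_nonneg hz.1 ht.1, mul_le_of_le_one_right hz.1 ht.2 |>.trans hz.2⟩

lemma intervalIntegrable_mul_comp_mul {f : ℝ → ℝ} {ε z : ℝ} (hf : ContinuousOn f (Icc 0 ε))
    (hz : z ∈ Icc 0 ε) : IntervalIntegrable (fun t => t * f (z * t)) MeasureTheory.volume 0 1 := by
  refine ContinuousOn.intervalIntegrable ?_
  rw [uIcc_of_le zero_le_one]
  exact continuousOn_id.mul (hf.comp (continuous_const.mul continuous_id).continuousOn
    fun _ ht => mul_mem_Icc_zero hz ht)

lemma abs_integral_mul_comp_mul_le {f : ℝ → ℝ} {z C : ℝ}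
    (hf : ∀ t ∈ Icc (0 : ℝ) 1, |f (z * t)| ≤ C * (z * t)) :
    |∫ t in (0 : ℝ)..1, t * f (z * t)| ≤ C * z / 3 := by
  have hbound : ∀ t ∈ Ioc (0 : ℝ) 1, ‖t * f (z * t)‖ ≤ C * z * t ^ 2 := by
    intro t ht
    rw [Real.norm_eq_abs, abs_mul, abs_of_nonneg ht.1.le]
    nlinarith [hf t (Ioc_subset_Icc_self ht), ht.1]
  calc |∫ t in (0 : ℝ)..1, t * f (z * t)|
      ≤ ∫ t in (0 : ℝ)..1, C * z * t ^ 2 :=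
        norm_integral_le_of_norm_le zero_le_one (.of_forall hbound)
          ((by fun_prop : Continuous fun t : ℝ => C * z * t ^ 2).intervalIntegrable _ _)
    _ = C * z / 3 := by
        rw [integral_const_mul, integral_pow]
        ring

lemma abs_sub_le_of_abs_sq_sub_sq_le {a b c K : ℝ} (hc : 0 < c) (hab : 2 * c ≤ a + b)
    (h : |a ^ 2 - b ^ 2| ≤ 2 * K) : |a - b| ≤ K / c := by
  rw [le_div_iff₀ hc]
  have hfactor : |a ^ 2 - b ^ 2| = |a - b| * (a + b) := by
    rw [show a ^ 2 - b ^ 2 = (a - b) * (a + b) by ring, abs_mul,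
      abs_of_pos (by linarith : 0 < a + b)]
  nlinarith [abs_nonneg (a - b)]

section Contraction

variable {ε c C : ℝ} {q qbar r : ℝ → ℝ}

theorem abs_sub_le_div_mul_of_abs_sub_le (hc : 0 < c)
    (hqc : ContinuousOn q (Icc 0 ε)) (hqbc : ContinuousOn qbar (Icc 0 ε))
    (hq : ∀ z ∈ Icc 0 ε, q z ^ 2 = -2 * (∫ t in (0 : ℝ)..1, t * q (z * t)) + r z)
    (hqb : ∀ z ∈ Icc 0 ε, qbar z ^ 2 = -2 * (∫ t in (0 : ℝ)..1, t * qbar (z * t)) + r z)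
    (hsum : ∀ z ∈ Icc 0 ε, 2 * c ≤ q z + qbar z)
    (hC : ∀ z ∈ Icc 0 ε, |q z - qbar z| ≤ C * z) :
    ∀ z ∈ Icc 0 ε, |q z - qbar z| ≤ C / (3 * c) * z := by
  intro z hz
  have hdiff : q z ^ 2 - qbar z ^ 2 = -2 * ∫ t in (0 : ℝ)..1, t * (q (z * t) - qbar (z * t)) := by
    simp only [mul_sub]
    rw [integral_sub (intervalIntegrable_mul_comp_mul hqc hz)
      (intervalIntegrable_mul_comp_mul hqbc hz), hq z hz, hqb z hz]
    ring
  have hint : |∫ t in (0 : ℝ)..1, t * (q (z * t) - qbar (z * t))| ≤ C * z / 3 :=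
    abs_integral_mul_comp_mul_le (f := fun w => q w - qbar w) fun t ht =>
      hC _ (mul_mem_Icc_zero hz ht)
  have hsq : |q z ^ 2 - qbar z ^ 2| ≤ 2 * (C * z / 3) := by
    rw [hdiff, abs_mul, abs_neg, abs_two]
    gcongr
  calc |q z - qbar z| ≤ C * z / 3 / c := abs_sub_le_of_abs_sq_sub_sq_le hc (hsum z hz) hsq
    _ = C / (3 * c) * z := by field_simp

end Contraction

theorem stmt_1_general (ε₁ M₁ : ℝ) (hM₁ : 0 < M₁) (hMε : M₁ * ε₁ < 2 / 3)
    (q qbar : ℝ → ℝ)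
    (hqc : ContinuousOn q (Icc 0 ε₁)) (hqbc : ContinuousOn qbar (Icc 0 ε₁))
    (hq : ∀ z ∈ Icc (0 : ℝ) ε₁,
      (q z) ^ 2 = -2 * (∫ t in (0 : ℝ)..1, t * q (z * t)) + 2 - 2 * z + z ^ 2 / 2)
    (hqb : ∀ z ∈ Icc (0 : ℝ) ε₁,
      (qbar z) ^ 2 = -2 * (∫ t in (0 : ℝ)..1, t * qbar (z * t)) + 2 - 2 * z + z ^ 2 / 2)
    (hq1 : ∀ z ∈ Icc (0 : ℝ) ε₁, |q z - 1| ≤ M₁ * z)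
    (hqb1 : ∀ z ∈ Icc (0 : ℝ) ε₁, |qbar z - 1| ≤ M₁ * z) :
    ∀ n : ℕ, 0 < n → ∀ z ∈ Icc (0 : ℝ) ε₁,
      |q z - qbar z| ≤ 2 * M₁ * (1 / (3 * (1 - M₁ * ε₁))) ^ n * |z| := by
  have hc : 0 < 1 - M₁ * ε₁ := by linarith
  have hsum : ∀ z ∈ Icc 0 ε₁, 2 * (1 - M₁ * ε₁) ≤ q z + qbar z := fun z hz => by
    have hMz : M₁ * z ≤ M₁ * ε₁ := mul_le_mul_of_nonneg_left hz.2 hM₁.le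
    linarith [neg_abs_le (q z - 1), neg_abs_le (qbar z - 1), hq1 z hz, hqb1 z hz]
  have hbound : ∀ n : ℕ, ∀ z ∈ Icc 0 ε₁,
      |q z - qbar z| ≤ 2 * M₁ * (1 / (3 * (1 - M₁ * ε₁))) ^ n * z := by
    intro n
    induction n with
    | zero =>
      intro z hz
      rw [pow_zero, mul_one]
      linarith [abs_sub_le (q z) 1 (qbar z), abs_sub_comm 1 (qbar z), hq1 z hz, hqb1 z hz]
    | succ n ih =>
      intro z hz
      have := abs_sub_le_div_mul_of_abs_sub_le hc hqc hqbc (r := fun z => 2 - 2 * z + z ^ 2 / 2)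
        (fun z hz => by rw [hq z hz]; ring) (fun z hz => by rw [hqb z hz]; ring) hsum ih z hz
      rw [pow_succ]
      convert this using 1
      ring
  intro n _ z hz
  rw [abs_of_nonneg hz.1]
  exact hbound n z hz

theorem stmt_1 (ε₁ M₁ : ℝ) (hM₁ : 0 < M₁) (hε₁ : 0 < ε₁) (hMε : M₁ * ε₁ < 2 / 3)
    (q qbar : ℝ → ℝ)
    (hqc : ContinuousOn q (Icc 0 ε₁)) (hqbc : ContinuousOn qbar (Icc 0 ε₁))
    (hq : ∀ z ∈ Icc (0 : ℝ) ε₁,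
      (q z) ^ 2 = -2 * (∫ t in (0 : ℝ)..1, t * q (z * t)) + 2 - 2 * z + z ^ 2 / 2)
    (hqb : ∀ z ∈ Icc (0 : ℝ) ε₁,
      (qbar z) ^ 2 = -2 * (∫ t in (0 : ℝ)..1, t * qbar (z * t)) + 2 - 2 * z + z ^ 2 / 2)
    (hq1 : ∀ z ∈ Icc (0 : ℝ) ε₁, |q z - 1| ≤ M₁ * z)
    (hqb1 : ∀ z ∈ Icc (0 : ℝ) ε₁, |qbar z - 1| ≤ M₁ * z) :
    ∀ n : ℕ, 0 < n → ∀ z ∈ Icc (0 : ℝ) ε₁,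
      |q z - qbar z| ≤ 2 * M₁ * (1 / (3 * (1 - M₁ * ε₁))) ^ n * |z| :=
  stmt_1_general ε₁ M₁ hM₁ hMε q qbar hqc hqbc hq hqb hq1 hqb1
end

section
/- Let M > 0 and ε₀ > 0 satisfy M ε₀ < 2/3, (2 + ε₀/2)(1 + M ε₀) ≤ M, (1 + M ε₀)(2M/3 + 2 + ε₀/2) ≤ M, and set ε = min(1/4, ε₀). Define q₀ ≡ 1 and q_{n+1}(z) = (−2∫₀¹ t q_n(zt) dt + 2 − 2z + z²/2)^{1/2} on [0, ε]. Then for all n ≥ 0: q_n(z) > 0, and for all n ≥ 1: |q_n(z) − 1| ≤ M z < 1 for 0 ≤ z ≤ ε. -/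
open Set intervalIntegral

lemma sqrt_near_one {A c : ℝ} (hc0 : 0 ≤ c) (hc1 : c ≤ 1) (h : |A - 1| ≤ c) :
    |Real.sqrt A - 1| ≤ c := by
  obtain ⟨h1, h2⟩ := abs_le.1 h
  have hA1 : 1 - c ≤ A := by linarith
  have hA2 : A ≤ 1 + c := by linarith
  have hlow : 1 - c ≤ Real.sqrt A := by
    have : (1 - c) ^ 2 ≤ A := by nlinarith
    have := Real.sqrt_le_sqrt this
    rwa [Real.sqrt_sq (by linarith)] at this
  have hhigh : Real.sqrt A ≤ 1 + c := by
    have : A ≤ (1 + c) ^ 2 := by nlinarith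
    have := Real.sqrt_le_sqrt this
    rwa [Real.sqrt_sq (by linarith)] at this
  rw [abs_le]; constructor <;> linarith

set_option maxHeartbeats 1000000 in
theorem stmt_6 (M ε₀ ε : ℝ) (hM : 0 < M) (hε₀ : 0 < ε₀)
    (h1 : M * ε₀ < 2 / 3)
    (h2 : (2 + ε₀ / 2) * (1 + M * ε₀) ≤ M)
    (h3 : (1 + M * ε₀) * (2 * M / 3 + 2 + ε₀ / 2) ≤ M)
    (hε : ε = min (1 / 4) ε₀)
    (q : ℕ → ℝ → ℝ)
    (hq0 : ∀ z, q 0 z = 1)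
    (hqrec : ∀ n : ℕ, ∀ z ∈ Icc (0 : ℝ) ε,
      q (n + 1) z =
        Real.sqrt (-2 * (∫ t in (0 : ℝ)..1, t * q n (z * t)) + 2 - 2 * z + z ^ 2 / 2))
    (hqcont : ∀ n, ContinuousOn (q n) (Icc (0 : ℝ) ε)) :
    (∀ n : ℕ, ∀ z ∈ Icc (0 : ℝ) ε, 0 < q n z) ∧
    (∀ n : ℕ, 1 ≤ n → ∀ z ∈ Icc (0 : ℝ) ε, |q n z - 1| ≤ M * z ∧ M * z < 1) := by
  have hεle : ε ≤ ε₀ := hε ▸ min_le_right _ _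
  have hεpos : 0 < ε := by rw [hε]; exact lt_min (by norm_num) hε₀
  have hMz1 : ∀ z ∈ Icc (0 : ℝ) ε, M * z < 1 := by
    intro z hz
    have : M * z ≤ M * ε₀ := by
      have := hz.2
      nlinarith
    linarith
  -- main induction
  have key : ∀ n : ℕ, ∀ z ∈ Icc (0 : ℝ) ε, |q n z - 1| ≤ M * z := by
    intro n
    induction n with
    | zero => intro z hz; rw [hq0]; simpa using mul_nonneg hM.le hz.1
    | succ n ih =>
      intro z hz
      obtain ⟨hz0, hzε⟩ := hz
      have hmaps : ∀ t ∈ Icc (0 : ℝ) 1, z * t ∈ Icc (0 : ℝ) ε := by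
        intro t ht
        constructor
        · exact mul_nonneg hz0 ht.1
        · calc z * t ≤ z * 1 := by nlinarith [ht.2]
            _ ≤ ε := by linarith
      have hcont : ContinuousOn (fun t : ℝ => t * (q n (z * t) - 1)) (Icc 0 1) := by
        apply ContinuousOn.mul continuousOn_id
        apply ContinuousOn.sub _ continuousOn_const
        exact (hqcont n).comp (continuousOn_const.mul continuousOn_id) hmaps
      have hcont2 : ContinuousOn (fun t : ℝ => t * q n (z * t)) (Icc 0 1) := by
        apply ContinuousOn.mul continuousOn_id
        exact (hqcont n).comp (continuousOn_const.mul continuousOn_id) hmaps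
      have hint : IntervalIntegrable (fun t : ℝ => t * (q n (z * t) - 1)) MeasureTheory.volume 0 1 := by
        apply ContinuousOn.intervalIntegrable
        rwa [uIcc_of_le (by norm_num : (0:ℝ) ≤ 1)]
      have hint2 : IntervalIntegrable (fun t : ℝ => t * q n (z * t)) MeasureTheory.volume 0 1 := by
        apply ContinuousOn.intervalIntegrable
        rwa [uIcc_of_le (by norm_num : (0:ℝ) ≤ 1)]
      set I : ℝ := ∫ t in (0:ℝ)..1, t * q n (z * t) with hI
      have hsplit0 : I - 1/2 = ∫ t in (0:ℝ)..1, t * (q n (z * t) - 1) := by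
        have : ∀ t : ℝ, t * (q n (z * t) - 1) = t * q n (z * t) - t := by intro t; ring
        simp_rw [this]
        rw [intervalIntegral.integral_sub hint2 (intervalIntegrable_id)]
        simp [hI]
      have hIbound : |I - 1/2| ≤ M * z / 3 := by
        rw [hsplit0]
        have hb : ∀ t ∈ Icc (0:ℝ) 1, |t * (q n (z * t) - 1)| ≤ M * z * t ^ 2 := by
          intro t ht
          have h1 := ih (z * t) (hmaps t ht)
          rw [abs_mul, abs_of_nonneg ht.1]
          calc t * |q n (z * t) - 1| ≤ t * (M * (z * t)) := by
                apply mul_le_mul_of_nonneg_left h1 ht.1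
            _ = M * z * t ^ 2 := by ring
        calc |∫ t in (0:ℝ)..1, t * (q n (z * t) - 1)|
            ≤ ∫ t in (0:ℝ)..1, |t * (q n (z * t) - 1)| :=
              intervalIntegral.abs_integral_le_integral_abs (by norm_num)
          _ ≤ ∫ t in (0:ℝ)..1, M * z * t ^ 2 := by
              apply intervalIntegral.integral_mono_on (by norm_num) hint.abs
              · apply ContinuousOn.intervalIntegrable
                exact (continuous_const.mul (continuous_pow 2)).continuousOn
              · exact hb
          _ = M * z / 3 := by
              rw [intervalIntegral.integral_const_mul]
              simp
              ring
      have hIbound2 := hIbound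
      rw [hqrec n z ⟨hz0, hzε⟩]
      clear hsplit0 hIbound hint hint2 hcont hcont2
      clear_value I
      rw [← hI]
      have hzε₀ : z ≤ ε₀ := le_trans hzε hεle
      have hAbound : |(-2 * I + 2 - 2 * z + z ^ 2 / 2) - 1| ≤ M * z := by
        have habs := abs_le.1 hIbound2
        clear hI hqrec hqcont hmaps ih hq0 hIbound2
        have hfac : 2 * M / 3 + 2 + z / 2 ≤ M := by
          have h4 : 2 * M / 3 + 2 + z / 2 ≤ 2 * M / 3 + 2 + ε₀ / 2 := by linarith
          have h5 : 2 * M / 3 + 2 + ε₀ / 2 ≤ (1 + M * ε₀) * (2 * M / 3 + 2 + ε₀ / 2) := by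
            nlinarith [mul_nonneg (mul_nonneg hM.le hε₀.le)
              (by positivity : (0:ℝ) ≤ 2 * M / 3 + 2 + ε₀ / 2)]
          linarith
        have hzfac : z * (2 * M / 3 + 2 + z / 2) ≤ z * M :=
          mul_le_mul_of_nonneg_left hfac hz0
        rw [abs_le]
        constructor <;> nlinarith [habs.1, habs.2]
      exact sqrt_near_one (by positivity) (le_of_lt (hMz1 z ⟨hz0, hzε⟩)) hAbound
  constructor
  · intro n z hz
    have h1 := key n z hz
    have h2 := hMz1 z hz
    have := (abs_le.1 h1).1
    linarith
  · intro n _ z hz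
    exact ⟨key n z hz, hMz1 z hz⟩
end

section
/- The iteration sequence q_n defined by q₀ ≡ 1 and q_{n+1}(z)² = −2∫₀¹ t q_n(zt) dt + 2 − 2z + z²/2 (positive square root) converges uniformly on [0, ε] to a continuous function q satisfying q(z)² = −2∫₀¹ t q(zt) dt + 2 − 2z + z²/2 and |q(z) − 1| ≤ M z on [0, ε]. -/
open Set intervalIntegral Filter

lemma helper_int (g : ℝ → ℝ) (C : ℝ)
    (hcont : ContinuousOn g (Icc 0 1))
    (hb : ∀ t ∈ Icc (0:ℝ) 1, |g t| ≤ C * t) :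
    |∫ t in (0:ℝ)..1, t * g t| ≤ C / 3 := by
  have hC : 0 ≤ C := by
    have h1 := hb 1 (by norm_num)
    have h2 := abs_nonneg (g 1); linarith
  have hcont' : ContinuousOn (fun t => t * g t) (Icc 0 1) :=
    continuousOn_id.mul hcont
  have hint : IntervalIntegrable (fun t => t * g t) MeasureTheory.volume 0 1 :=
    (hcont'.mono (by rw [uIcc_of_le (by norm_num : (0:ℝ) ≤ 1)])).intervalIntegrable
  have hint2 : IntervalIntegrable (fun t => |t * g t|) MeasureTheory.volume 0 1 :=
    hint.abs
  have hint3 : IntervalIntegrable (fun t => C * t^2) MeasureTheory.volume 0 1 :=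
    (continuous_const.mul (continuous_pow 2)).intervalIntegrable 0 1
  calc |∫ t in (0:ℝ)..1, t * g t| ≤ ∫ t in (0:ℝ)..1, |t * g t| :=
        abs_integral_le_integral_abs (by norm_num)
    _ ≤ ∫ t in (0:ℝ)..1, C * t^2 := by
        apply integral_mono_on (by norm_num) hint2 hint3
        intro t ht
        rw [abs_mul, abs_of_nonneg ht.1]
        calc t * |g t| ≤ t * (C * t) := mul_le_mul_of_nonneg_left (hb t ht) ht.1
          _ = C * t^2 := by ring
    _ = C / 3 := by
        rw [intervalIntegral.integral_const_mul, integral_pow]; norm_num; ring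

lemma arith_lb (M z I A : ℝ) (hz0 : 0 ≤ z)
    (hup : I - 1/2 ≤ M*z/3) (hAdef : A = -2*I + 2 - 2*z + z^2/2)
    (e1 : 0 ≤ (2/3 - M*z)*(M*z)) (e2 : 0 ≤ (M-6)*z) :
    (1 - M*z)^2 ≤ A := by nlinarith [sq_nonneg z]

lemma arith_ub (M z I A : ℝ) (hM : 0 < M) (hz0 : 0 ≤ z)
    (hlo : -(M*z/3) ≤ I - 1/2) (hAdef : A = -2*I + 2 - 2*z + z^2/2)
    (e3 : 0 ≤ z*(4-z)) :
    A ≤ (1 + M*z)^2 := by nlinarith [sq_nonneg (M*z), mul_nonneg hM.le hz0]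

set_option maxHeartbeats 1000000 in
theorem stmt_8 (M ε₀ ε : ℝ) (hM : 0 < M) (hε₀ : 0 < ε₀)
    (h1 : M * ε₀ < 2 / 3)
    (h2 : (2 + ε₀ / 2) * (1 + M * ε₀) ≤ M)
    (h3 : (1 + M * ε₀) * (2 * M / 3 + 2 + ε₀ / 2) ≤ M)
    (hε : ε = min (1 / 4) ε₀)
    (q : ℕ → ℝ → ℝ)
    (hq0 : ∀ z, q 0 z = 1)
    (hqrec : ∀ n : ℕ, ∀ z ∈ Icc (0 : ℝ) ε,
      q (n + 1) z =
        Real.sqrt (-2 * (∫ t in (0 : ℝ)..1, t * q n (z * t)) + 2 - 2 * z + z ^ 2 / 2))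
    (hqcont : ∀ n, ContinuousOn (q n) (Icc (0 : ℝ) ε)) :
    ∃ qlim : ℝ → ℝ, ContinuousOn qlim (Icc (0 : ℝ) ε) ∧
      TendstoUniformlyOn q qlim Filter.atTop (Icc (0 : ℝ) ε) ∧
      (∀ z ∈ Icc (0 : ℝ) ε,
        (qlim z) ^ 2 = -2 * (∫ t in (0 : ℝ)..1, t * qlim (z * t)) + 2 - 2 * z + z ^ 2 / 2) ∧
      (∀ z ∈ Icc (0 : ℝ) ε, |qlim z - 1| ≤ M * z) := by
  -- numeric facts
  have hεε₀ : ε ≤ ε₀ := hε ▸ min_le_right _ _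
  have hεle : ε ≤ 1/4 := hε ▸ min_le_left _ _
  have hεpos : 0 < ε := hε ▸ lt_min (by norm_num) hε₀
  have hMε : M * ε < 2/3 := lt_of_le_of_lt (by nlinarith) h1
  have hM6 : 6 ≤ M := by nlinarith [mul_pos hM hε₀]
  have h1Mε : 1/3 < 1 - M*ε := by linarith
  set γ : ℝ := 1/(3*(1-M*ε)) with hγdef
  have hγpos : 0 < γ := by rw [hγdef]; positivity
  have hγlt1 : γ < 1 := by rw [hγdef, div_lt_one (by linarith)]; linarith
  -- membership helper
  have hmem : ∀ z ∈ Icc (0:ℝ) ε, ∀ t ∈ Icc (0:ℝ) 1, z * t ∈ Icc (0:ℝ) ε := by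
    intro z hz t ht
    exact ⟨mul_nonneg hz.1 ht.1, (mul_le_of_le_one_right hz.1 ht.2).trans hz.2⟩
  -- continuity of composed functions
  have hqc : ∀ (f : ℝ → ℝ), ContinuousOn f (Icc 0 ε) → ∀ z ∈ Icc (0:ℝ) ε,
      ContinuousOn (fun t => f (z*t)) (Icc 0 1) := by
    intro f hf z hz
    exact hf.comp (continuous_const.mul continuous_id).continuousOn (fun t ht => hmem z hz t ht)
  have hintg : ∀ (f : ℝ → ℝ), ContinuousOn f (Icc 0 ε) → ∀ z ∈ Icc (0:ℝ) ε,
      IntervalIntegrable (fun t => t * f (z*t)) MeasureTheory.volume 0 1 := by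
    intro f hf z hz
    exact ((continuousOn_id.mul (hqc f hf z hz)).mono
      (by rw [uIcc_of_le (by norm_num : (0:ℝ) ≤ 1)])).intervalIntegrable
  -- integral estimate
  have hIest' : ∀ n, ∀ z ∈ Icc (0:ℝ) ε, (∀ w ∈ Icc (0:ℝ) ε, |q n w - 1| ≤ M*w) →
      |(∫ t in (0:ℝ)..1, t * q n (z*t)) - 1/2| ≤ M*z/3 := by
    intro n z hz hb
    have hgc : ContinuousOn (fun t => q n (z*t) - 1) (Icc 0 1) :=
      (hqc (q n) (hqcont n) z hz).sub continuousOn_const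
    have key := helper_int (fun t => q n (z*t) - 1) (M*z) hgc (by
      intro t ht
      calc |q n (z*t) - 1| ≤ M*(z*t) := hb _ (hmem z hz t ht)
        _ = (M*z)*t := by ring)
    have heq : (∫ t in (0:ℝ)..1, t * (q n (z*t) - 1))
        = (∫ t in (0:ℝ)..1, t * q n (z*t)) - 1/2 := by
      have h1' : (∫ t in (0:ℝ)..1, t * (q n (z*t) - 1))
          = ∫ t in (0:ℝ)..1, (t * q n (z*t) - t) := by
        apply intervalIntegral.integral_congr; intro t _; ring
      rw [h1', intervalIntegral.integral_sub (hintg (q n) (hqcont n) z hz)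
        intervalIntegrable_id, integral_id]
      norm_num
    rw [heq] at key
    calc |(∫ t in (0:ℝ)..1, t * q n (z*t)) - 1/2| ≤ (M*z)/3 := key
      _ = M*z/3 := by ring
  -- uniform bound
  have hbound : ∀ n, ∀ z ∈ Icc (0:ℝ) ε, |q n z - 1| ≤ M * z := by
    intro n
    induction n with
    | zero => intro z hz; rw [hq0]; simpa using mul_nonneg hM.le hz.1
    | succ n ih =>
      intro z hz
      have hI := hIest' n z hz ih
      have hMz1 : M * z ≤ M * ε := by nlinarith [hz.1, hz.2]
      set A : ℝ := -2 * (∫ t in (0:ℝ)..1, t * q n (z*t)) + 2 - 2*z + z^2/2 with hAdef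
      have hMzlt : M*z < 2/3 := lt_of_le_of_lt hMz1 hMε
      have hz14 : z ≤ 1/4 := hz.2.trans hεle
      have habsI := abs_le.mp hI
      have e1 : 0 ≤ (2/3 - M*z)*(M*z) := mul_nonneg (by linarith) (mul_nonneg hM.le hz.1)
      have e2 : 0 ≤ (M-6)*z := mul_nonneg (by linarith) hz.1
      have e3 : 0 ≤ z*(4-z) := mul_nonneg hz.1 (by linarith)
      have hAlb : (1 - M*z)^2 ≤ A := arith_lb M z _ A hz.1 habsI.2 hAdef e1 e2
      have hAub : A ≤ (1 + M*z)^2 := arith_ub M z _ A hM hz.1 habsI.1 hAdef e3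
      have h1mz : 0 ≤ 1 - M*z := by linarith
      rw [hqrec n z hz, ← hAdef, abs_le]
      constructor
      · have : 1 - M*z = Real.sqrt ((1-M*z)^2) := (Real.sqrt_sq h1mz).symm
        nlinarith [Real.sqrt_le_sqrt hAlb, Real.sqrt_sq h1mz]
      · have h := Real.sqrt_le_sqrt hAub
        rw [Real.sqrt_sq (by linarith [mul_nonneg hM.le hz.1] : (0:ℝ) ≤ 1 + M*z)] at h
        linarith
  -- lower bound on the expression under sqrt
  have hFlb : ∀ n, ∀ z ∈ Icc (0:ℝ) ε,
      (1 - M*z)^2 ≤ -2 * (∫ t in (0:ℝ)..1, t * q n (z*t)) + 2 - 2*z + z^2/2 := by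
    intro n z hz
    have hI := hIest' n z hz (hbound n)
    have habsI := abs_le.mp hI
    have hMz1 : M * z ≤ M * ε := by nlinarith [hz.1, hz.2]
    have hMzlt : M*z < 2/3 := lt_of_le_of_lt hMz1 hMε
    have e1 : 0 ≤ (2/3 - M*z)*(M*z) := mul_nonneg (by linarith) (mul_nonneg hM.le hz.1)
    have e2 : 0 ≤ (M-6)*z := mul_nonneg (by linarith) hz.1
    exact arith_lb M z _ _ hz.1 habsI.2 rfl e1 e2
  -- contraction estimate
  have hdiff : ∀ n, ∀ z ∈ Icc (0:ℝ) ε, |q (n+1) z - q n z| ≤ M * γ^n * z := by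
    intro n
    induction n with
    | zero =>
      intro z hz
      simpa [hq0, pow_zero] using hbound 1 z hz
    | succ n ih =>
      intro z hz
      set I1 : ℝ := ∫ t in (0:ℝ)..1, t * q (n+1) (z*t) with hI1
      set I0 : ℝ := ∫ t in (0:ℝ)..1, t * q n (z*t) with hI0
      have hd : |I1 - I0| ≤ (M * γ^n * z)/3 := by
        have hgc : ContinuousOn (fun t => q (n+1) (z*t) - q n (z*t)) (Icc 0 1) :=
          (hqc (q (n+1)) (hqcont (n+1)) z hz).sub (hqc (q n) (hqcont n) z hz)
        have key := helper_int (fun t => q (n+1) (z*t) - q n (z*t)) (M*γ^n*z) hgc (by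
          intro t ht
          calc |q (n+1) (z*t) - q n (z*t)| ≤ M * γ^n * (z*t) := ih _ (hmem z hz t ht)
            _ = (M*γ^n*z)*t := by ring)
        have heq : (∫ t in (0:ℝ)..1, t * (q (n+1) (z*t) - q n (z*t))) = I1 - I0 := by
          have h1' : (∫ t in (0:ℝ)..1, t * (q (n+1) (z*t) - q n (z*t)))
              = ∫ t in (0:ℝ)..1, (t * q (n+1) (z*t) - t * q n (z*t)) := by
            apply intervalIntegral.integral_congr; intro t _; ring
          rw [h1', intervalIntegral.integral_sub (hintg _ (hqcont (n+1)) z hz)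
            (hintg _ (hqcont n) z hz)]
        rw [heq] at key
        exact key
      set A : ℝ := -2 * I1 + 2 - 2*z + z^2/2 with hAdef
      set B : ℝ := -2 * I0 + 2 - 2*z + z^2/2 with hBdef
      have hMz1 : M * z ≤ M * ε := by nlinarith [hz.1, hz.2]
      have h1mz : 0 ≤ 1 - M*z := by linarith
      have hAlb : (1 - M*z)^2 ≤ A := hFlb (n+1) z hz
      have hBlb : (1 - M*z)^2 ≤ B := hFlb n z hz
      have hA0 : 0 ≤ A := le_trans (sq_nonneg _) hAlb
      have hB0 : 0 ≤ B := le_trans (sq_nonneg _) hBlb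
      have hsA : 1 - M*ε ≤ Real.sqrt A := by
        have := Real.sqrt_le_sqrt hAlb
        rw [Real.sqrt_sq h1mz] at this
        linarith
      have hsB : 1 - M*ε ≤ Real.sqrt B := by
        have := Real.sqrt_le_sqrt hBlb
        rw [Real.sqrt_sq h1mz] at this
        linarith
      have hsum : 2*(1-M*ε) ≤ Real.sqrt A + Real.sqrt B := by linarith
      have hsumpos : 0 < Real.sqrt A + Real.sqrt B := by linarith
      have hprod : (Real.sqrt A - Real.sqrt B) * (Real.sqrt A + Real.sqrt B) = A - B := by
        have hAA := Real.mul_self_sqrt hA0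
        have hBB := Real.mul_self_sqrt hB0
        linear_combination hAA - hBB
      have habs : |Real.sqrt A - Real.sqrt B| * (Real.sqrt A + Real.sqrt B) = |A - B| := by
        rw [← abs_of_pos hsumpos, ← abs_mul, hprod]
      have hq2 : q (n+1+1) z = Real.sqrt A := by rw [hqrec (n+1) z hz]
      have hq1 : q (n+1) z = Real.sqrt B := by rw [hqrec n z hz]
      rw [hq2, hq1]
      have hAB : |A - B| ≤ 2 * ((M * γ^n * z)/3) := by
        have : A - B = -2 * (I1 - I0) := by rw [hAdef, hBdef]; ring
        rw [this, abs_mul]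
        calc |(-2:ℝ)| * |I1 - I0| = 2 * |I1 - I0| := by norm_num
          _ ≤ 2 * ((M * γ^n * z)/3) := by linarith [hd]
      have hkey : |Real.sqrt A - Real.sqrt B| * (2*(1-M*ε)) ≤ 2 * ((M * γ^n * z)/3) := by
        calc |Real.sqrt A - Real.sqrt B| * (2*(1-M*ε))
            ≤ |Real.sqrt A - Real.sqrt B| * (Real.sqrt A + Real.sqrt B) :=
              mul_le_mul_of_nonneg_left hsum (abs_nonneg _)
          _ = |A - B| := habs
          _ ≤ 2 * ((M * γ^n * z)/3) := hAB
      have hγ' : γ * (3*(1-M*ε)) = 1 := by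
        rw [hγdef]; field_simp
      have hgn : 0 ≤ γ^n := pow_nonneg hγpos.le n
      rw [pow_succ]
      nlinarith [hkey, hγ', abs_nonneg (Real.sqrt A - Real.sqrt B)]
  -- Cauchy / limit construction
  have hdist : ∀ z ∈ Icc (0:ℝ) ε, ∀ n, dist (q n z) (q (n+1) z) ≤ (M*ε) * γ^n := by
    intro z hz n
    rw [dist_comm, Real.dist_eq]
    calc |q (n+1) z - q n z| ≤ M * γ^n * z := hdiff n z hz
      _ ≤ (M*ε) * γ^n := by
          have hgn := pow_nonneg hγpos.le n
          nlinarith [mul_le_mul_of_nonneg_left hz.2 (mul_nonneg hM.le hgn)]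
  have hex : ∀ z : ℝ, ∃ L, z ∈ Icc (0:ℝ) ε → Tendsto (fun n => q n z) atTop (nhds L) := by
    intro z
    by_cases hz : z ∈ Icc (0:ℝ) ε
    · obtain ⟨L, hL⟩ := cauchySeq_tendsto_of_complete
        (cauchySeq_of_le_geometric γ (M*ε) hγlt1 (hdist z hz))
      exact ⟨L, fun _ => hL⟩
    · exact ⟨0, fun h => absurd h hz⟩
  choose qlim hqlim using hex
  have htail : ∀ z ∈ Icc (0:ℝ) ε, ∀ n, dist (q n z) (qlim z) ≤ (M*ε) * γ^n / (1-γ) :=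
    fun z hz n => dist_le_of_le_geometric_of_tendsto γ (M*ε) hγlt1 (hdist z hz) (hqlim z hz) n
  have hK0 : Tendsto (fun n : ℕ => (M*ε) * γ^n / (1-γ)) atTop (nhds 0) := by
    have h0 := tendsto_pow_atTop_nhds_zero_of_lt_one hγpos.le hγlt1
    have h2' := (h0.const_mul (M*ε)).div_const (1-γ)
    simpa using h2'
  have huc : TendstoUniformlyOn q qlim atTop (Icc (0:ℝ) ε) := by
    rw [Metric.tendstoUniformlyOn_iff]
    intro δ hδ
    filter_upwards [hK0.eventually (gt_mem_nhds hδ)] with n hn z hz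
    calc dist (qlim z) (q n z) = dist (q n z) (qlim z) := dist_comm _ _
      _ ≤ (M*ε)*γ^n/(1-γ) := htail z hz n
      _ < δ := hn
  have hcontlim : ContinuousOn qlim (Icc (0:ℝ) ε) :=
    huc.continuousOn (Filter.Eventually.of_forall hqcont).frequently
  refine ⟨qlim, hcontlim, huc, ?_, ?_⟩
  · intro z hz
    have hIconv : Tendsto (fun n => ∫ t in (0:ℝ)..1, t * q n (z*t)) atTop
        (nhds (∫ t in (0:ℝ)..1, t * qlim (z*t))) := by
      have hb : ∀ n, ‖(∫ t in (0:ℝ)..1, t * q n (z*t)) - ∫ t in (0:ℝ)..1, t * qlim (z*t)‖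
          ≤ (M*ε)*γ^n/(1-γ) := by
        intro n
        have heq : (∫ t in (0:ℝ)..1, t * q n (z*t)) - (∫ t in (0:ℝ)..1, t * qlim (z*t))
            = ∫ t in (0:ℝ)..1, (t * q n (z*t) - t * qlim (z*t)) :=
          (intervalIntegral.integral_sub (hintg _ (hqcont n) z hz)
            (hintg _ hcontlim z hz)).symm
        rw [heq]
        have hbd : ∀ t ∈ Set.uIoc (0:ℝ) 1,
            ‖t * q n (z*t) - t * qlim (z*t)‖ ≤ (M*ε)*γ^n/(1-γ) := by
          intro t ht
          rw [uIoc_of_le (by norm_num : (0:ℝ) ≤ 1)] at ht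
          have htI : t ∈ Icc (0:ℝ) 1 := ⟨ht.1.le, ht.2⟩
          have hw := hmem z hz t htI
          have hd2 := htail _ hw n
          rw [Real.dist_eq] at hd2
          have ht1 : |t| ≤ 1 := by rw [abs_of_nonneg ht.1.le]; exact ht.2
          calc ‖t * q n (z*t) - t * qlim (z*t)‖ = |t| * |q n (z*t) - qlim (z*t)| := by
                rw [← abs_mul]; congr 1; ring
            _ ≤ 1 * ((M*ε)*γ^n/(1-γ)) := by
                apply mul_le_mul ht1 hd2 (abs_nonneg _) one_pos.le
            _ = (M*ε)*γ^n/(1-γ) := one_mul _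
        have hnorm := intervalIntegral.norm_integral_le_of_norm_le_const hbd
        simpa using hnorm
      have h0 : Tendsto (fun n => (∫ t in (0:ℝ)..1, t * q n (z*t))
          - ∫ t in (0:ℝ)..1, t * qlim (z*t)) atTop (nhds 0) :=
        squeeze_zero_norm hb hK0
      have h1' := h0.add_const (∫ t in (0:ℝ)..1, t * qlim (z*t))
      simpa using h1'
    set L : ℝ := ∫ t in (0:ℝ)..1, t * qlim (z*t) with hLdef
    have hFconv : Tendsto (fun n => -2 * (∫ t in (0:ℝ)..1, t * q n (z*t)) + 2 - 2*z + z^2/2)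
        atTop (nhds (-2*L + 2 - 2*z + z^2/2)) := by
      have h := (hIconv.const_mul (-2)).add_const (2 - 2*z + z^2/2)
      have e1 : (-2*L + (2 - 2*z + z^2/2)) = -2*L + 2 - 2*z + z^2/2 := by ring
      rw [e1] at h
      exact h.congr (fun n => by ring)
    have hsqrt : Tendsto (fun n => Real.sqrt (-2 * (∫ t in (0:ℝ)..1, t * q n (z*t))
        + 2 - 2*z + z^2/2)) atTop (nhds (Real.sqrt (-2*L + 2 - 2*z + z^2/2))) :=
      (Real.continuous_sqrt.tendsto _).comp hFconv
    have hshift : Tendsto (fun n => q (n+1) z) atTop (nhds (qlim z)) :=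
      (hqlim z hz).comp (tendsto_add_atTop_nat 1)
    have hsame : (fun n => q (n+1) z) = fun n => Real.sqrt (-2 * (∫ t in (0:ℝ)..1,
        t * q n (z*t)) + 2 - 2*z + z^2/2) := funext fun n => hqrec n z hz
    rw [hsame] at hshift
    have heqlim : qlim z = Real.sqrt (-2*L + 2 - 2*z + z^2/2) :=
      tendsto_nhds_unique hshift hsqrt
    have hF0 : 0 ≤ -2*L + 2 - 2*z + z^2/2 :=
      ge_of_tendsto hFconv (Filter.Eventually.of_forall (fun n =>
        le_trans (sq_nonneg _) (hFlb n z hz)))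
    rw [heqlim, Real.sq_sqrt hF0]
  · intro z hz
    have habs : Tendsto (fun n => |q n z - 1|) atTop (nhds (|qlim z - 1|)) :=
      ((hqlim z hz).sub tendsto_const_nhds).abs
    exact le_of_tendsto habs (Filter.Eventually.of_forall fun n => hbound n z hz)
end

section
/- Extend the iteration to the complex disk B_ε = {z ∈ ℂ : |z| ≤ ε}: q₀ ≡ 1, q_{n+1}(z) = (1 + f_{n+1}(z))^{1/2} with f_{n+1}(z) = −2∫₀¹ t (q_n(zt) − 1) dt − 2z + z²/2 and the principal branch square root. Then each q_n is analytic on the open disk, continuous on B_ε, and satisfies |q_n(z) − 1| ≤ M|z| < 1 for all n ≥ 1 and z ∈ B_ε. -/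
open Set intervalIntegral

lemma sqrt_aux_bound {w : ℂ} (hw : ‖w‖ < 1) :
    ‖(1 + w) ^ ((1:ℂ)/2) - 1‖ ≤ ‖w‖ := by
  have h0 : (1 : ℂ) + w ≠ 0 := by
    intro h
    have h1 : (1:ℂ) = -w := by linear_combination h
    have : ‖(1:ℂ)‖ = ‖w‖ := by rw [h1, norm_neg]
    simp at this
    linarith
  set s := (1 + w) ^ ((1:ℂ)/2) with hs
  have hsq : s * s = 1 + w := by
    rw [hs, ← Complex.cpow_add _ _ h0]
    norm_num
  have hre : 0 ≤ s.re := by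
    rw [hs, Complex.cpow_def_of_ne_zero h0, Complex.exp_re]
    apply mul_nonneg (Real.exp_nonneg _)
    apply Real.cos_nonneg_of_mem_Icc
    have him : (Complex.log (1 + w) * ((1:ℂ)/2)).im = (1 + w).arg / 2 := by
      simp [Complex.mul_im, Complex.log_im]
      ring
    rw [him]
    have harg := Complex.arg_mem_Ioc (1 + w)
    constructor
    · linarith [harg.1]
    · linarith [harg.2, Real.pi_pos]
  have h1 : (1:ℝ) ≤ ‖s + 1‖ := by
    have h2 := Complex.re_le_norm (s + 1)
    have h3 : (s + 1).re = s.re + 1 := by simp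
    linarith
  calc ‖s - 1‖ = ‖s - 1‖ * 1 := (mul_one _).symm
    _ ≤ ‖s - 1‖ * ‖s + 1‖ := by
        exact mul_le_mul_of_nonneg_left h1 (norm_nonneg _)
    _ = ‖(s - 1) * (s + 1)‖ := (norm_mul _ _).symm
    _ = ‖w‖ := by
        congr 1
        linear_combination hsq

set_option maxHeartbeats 2000000 in
theorem stmt_9 (M ε₀ ε : ℝ) (hM : 0 < M) (hε₀ : 0 < ε₀)
    (h1 : M * ε₀ < 2 / 3)
    (h2 : (2 + ε₀ / 2) * (1 + M * ε₀) ≤ M)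
    (h3 : (1 + M * ε₀) * (2 * M / 3 + 2 + ε₀ / 2) ≤ M)
    (hε : ε = min (1 / 4) ε₀)
    (q : ℕ → ℂ → ℂ)
    (hq0 : ∀ z, q 0 z = 1)
    (hqrec : ∀ n : ℕ, ∀ z : ℂ, ‖z‖ ≤ ε →
      q (n + 1) z =
        (1 + (-2 * (∫ t in (0 : ℝ)..1, (t : ℂ) * (q n (z * (t : ℂ)) - 1))
          - 2 * z + z ^ 2 / 2)) ^ ((1 : ℂ) / 2)) :
    (∀ n : ℕ, AnalyticOnNhd ℂ (q n) (Metric.ball (0 : ℂ) ε) ∧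
      ContinuousOn (q n) (Metric.closedBall (0 : ℂ) ε)) ∧
    (∀ n : ℕ, 1 ≤ n → ∀ z : ℂ, ‖z‖ ≤ ε → ‖q n z - 1‖ ≤ M * ‖z‖ ∧ M * ‖z‖ < 1) := by
  have hε0 : 0 < ε := hε ▸ lt_min (by norm_num) hε₀
  have hεε₀ : ε ≤ ε₀ := hε ▸ min_le_right _ _
  have hMz1 : ∀ z : ℂ, ‖z‖ ≤ ε → M * ‖z‖ < 1 := by
    intro z hz
    have : M * ‖z‖ ≤ M * ε₀ := mul_le_mul_of_nonneg_left (hz.trans hεε₀) hM.le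
    linarith
  -- membership helpers
  have hmulmem : ∀ z : ℂ, ‖z‖ ≤ ε → ∀ t : ℝ, t ∈ Icc (0:ℝ) 1 →
      z * (t:ℂ) ∈ Metric.closedBall (0:ℂ) ε := by
    intro z hz t ht
    simp only [Metric.mem_closedBall, dist_zero_right, norm_mul, Complex.norm_real, Real.norm_eq_abs]
    have habs : |t| ≤ 1 := abs_le.2 ⟨by linarith [ht.1], ht.2⟩
    calc ‖z‖ * |t| ≤ ε * 1 := mul_le_mul hz habs (abs_nonneg _) hε0.le
      _ = ε := mul_one ε
  have hcball : ∀ z : ℂ, z ∈ Metric.closedBall (0:ℂ) ε → ‖z‖ ≤ ε := by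
    intro z hz; simpa using hz
  have key : ∀ n : ℕ, AnalyticOnNhd ℂ (q n) (Metric.ball (0 : ℂ) ε) ∧
      ContinuousOn (q n) (Metric.closedBall (0 : ℂ) ε) ∧
      ∀ z : ℂ, ‖z‖ ≤ ε → ‖q n z - 1‖ ≤ M * ‖z‖ := by
    intro n
    induction n with
    | zero =>
      have hq0' : q 0 = fun _ => (1:ℂ) := funext hq0
      rw [hq0']
      refine ⟨analyticOnNhd_const, continuousOn_const, fun z _ => ?_⟩
      simp
      positivity
    | succ n ih =>
      obtain ⟨hA, hC, hB⟩ := ih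
      set I : ℂ → ℂ := fun z => ∫ t in (0:ℝ)..1, (t:ℂ) * (q n (z * (t:ℂ)) - 1) with hI
      set F : ℂ → ℂ := fun z => 1 + (-2 * I z - 2*z + z^2/2) with hF
      have hqrec' : ∀ z : ℂ, ‖z‖ ≤ ε → q (n+1) z = F z ^ ((1:ℂ)/2) := fun z hz => hqrec n z hz
      -- continuity in t of integrand
      have hcont_t : ∀ z : ℂ, ‖z‖ ≤ ε →
          ContinuousOn (fun t:ℝ => (t:ℂ) * (q n (z * (t:ℂ)) - 1)) (Icc (0:ℝ) 1) := by
        intro z hz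
        refine ContinuousOn.mul (Complex.continuous_ofReal.continuousOn) ?_
        refine ContinuousOn.sub ?_ continuousOn_const
        exact hC.comp ((continuous_const.mul Complex.continuous_ofReal).continuousOn)
          (fun t ht => hmulmem z hz t ht)
      have hInt : ∀ z : ℂ, ‖z‖ ≤ ε →
          IntervalIntegrable (fun t:ℝ => (t:ℂ) * (q n (z * (t:ℂ)) - 1))
            MeasureTheory.volume 0 1 := by
        intro z hz
        exact ((uIcc_of_le (zero_le_one (α := ℝ))).symm ▸ hcont_t z hz).intervalIntegrable
      have haesm : ∀ x : ℂ, ‖x‖ ≤ ε → MeasureTheory.AEStronglyMeasurable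
          (fun t : ℝ => (t:ℂ) * (q n (x * (t:ℂ)) - 1))
          (MeasureTheory.volume.restrict (Set.uIoc (0:ℝ) 1)) := by
        intro x hx
        refine ((hcont_t x hx).mono ?_).aestronglyMeasurable measurableSet_uIoc
        rw [Set.uIoc_of_le zero_le_one]
        exact Set.Ioc_subset_Icc_self
      -- the integral bound
      have hIb : ∀ z : ℂ, ‖z‖ ≤ ε → ‖I z‖ ≤ M * ‖z‖ / 3 := by
        intro z hz
        have hle : ∀ᵐ (t : ℝ) ∂(MeasureTheory.volume.restrict (Set.uIoc (0:ℝ) 1)),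
            ‖(t:ℂ) * (q n (z * (t:ℂ)) - 1)‖ ≤ M * ‖z‖ * t^2 := by
          refine (MeasureTheory.ae_restrict_iff' measurableSet_uIoc).2
            (MeasureTheory.ae_of_all _ ?_)
          intro t ht
          rw [Set.uIoc_of_le zero_le_one] at ht
          have ht0 : 0 < t := ht.1
          have ht1 : t ≤ 1 := ht.2
          rw [norm_mul, Complex.norm_real, Real.norm_eq_abs, abs_of_pos ht0]
          have hb := hB (z * (t:ℂ)) (hcball _ (hmulmem z hz t ⟨ht0.le, ht1⟩))
          have hzt : ‖z * (t:ℂ)‖ = ‖z‖ * t := by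
            rw [norm_mul, Complex.norm_real, Real.norm_eq_abs, abs_of_pos ht0]
          rw [hzt] at hb
          nlinarith [norm_nonneg (q n (z * (t:ℂ)) - 1), norm_nonneg z]
        have hgi : IntervalIntegrable (fun t:ℝ => M * ‖z‖ * t^2)
            MeasureTheory.volume 0 1 := by
          apply Continuous.intervalIntegrable
          continuity
        have hkey := intervalIntegral.norm_integral_le_abs_of_norm_le hle hgi
        have hval : (∫ t in (0:ℝ)..1, M * ‖z‖ * t^2) = M * ‖z‖ / 3 := by
          rw [intervalIntegral.integral_const_mul]
          simp [integral_pow]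
          ring
        rw [hval, abs_of_nonneg (by positivity)] at hkey
        exact hkey
      -- bound on F z - 1
      have hFb : ∀ z : ℂ, ‖z‖ ≤ ε → ‖F z - 1‖ ≤ M * ‖z‖ := by
        intro z hz
        have h' := hIb z hz
        have hzε : ‖z‖ ≤ ε₀ := hz.trans hεε₀
        have heq : F z - 1 = -2 * I z - 2*z + z^2/2 := by rw [hF]; ring
        have hn : ‖F z - 1‖ ≤ 2*‖I z‖ + 2*‖z‖ + ‖z‖^2/2 := by
          rw [heq]
          calc ‖-2 * I z - 2*z + z^2/2‖ ≤ ‖-2 * I z - 2*z‖ + ‖z^2/2‖ := norm_add_le _ _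
            _ ≤ ‖(-2:ℂ) * I z‖ + ‖(2:ℂ)*z‖ + ‖z^2/2‖ := by
                exact add_le_add_left (norm_sub_le _ _) _
            _ = 2*‖I z‖ + 2*‖z‖ + ‖z‖^2/2 := by
                rw [norm_mul, norm_mul, norm_div, norm_pow]
                norm_num
        have hpos : 0 ≤ ‖z‖ := norm_nonneg z
        have hX : 2*M/3 + 2 + ε₀/2 ≤ M := by
          nlinarith [mul_nonneg (mul_nonneg hM.le hε₀.le)
            (show (0:ℝ) ≤ 2*M/3 + 2 + ε₀/2 by positivity)]
        have hsq : ‖z‖^2 ≤ ε₀ * ‖z‖ := by nlinarith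
        have hfin := mul_le_mul_of_nonneg_right hX hpos
        nlinarith [hn, h', hsq, hfin]
      -- slit plane
      have hslit : ∀ z : ℂ, ‖z‖ ≤ ε → F z ∈ Complex.slitPlane := by
        intro z hz
        rw [Complex.mem_slitPlane_iff]
        left
        have h1' : ‖F z - 1‖ < 1 := (hFb z hz).trans_lt (hMz1 z hz)
        have h2' : |(F z - 1).re| ≤ ‖F z - 1‖ := by
          exact Complex.abs_re_le_norm _
        have h3' : (F z).re = (F z - 1).re + 1 := by simp
        have := abs_le.1 h2'
        linarith [this.1]
      -- bound for q (n+1)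
      have hBnext : ∀ z : ℂ, ‖z‖ ≤ ε → ‖q (n+1) z - 1‖ ≤ M * ‖z‖ := by
        intro z hz
        rw [hqrec' z hz]
        have hw : ‖F z - 1‖ < 1 := (hFb z hz).trans_lt (hMz1 z hz)
        have := sqrt_aux_bound hw
        rw [show (1:ℂ) + (F z - 1) = F z from by ring] at this
        exact this.trans (hFb z hz)
      -- continuity of I on closed ball
      have hIcont : ContinuousOn I (Metric.closedBall (0:ℂ) ε) := by
        intro z₀ hz₀
        refine intervalIntegral.continuousWithinAt_of_dominated_interval
          (bound := fun _ => M * ε) ?_ ?_ intervalIntegrable_const ?_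
        · filter_upwards [self_mem_nhdsWithin] with x hx
          exact haesm x (hcball x hx)
        · filter_upwards [self_mem_nhdsWithin] with x hx
          refine MeasureTheory.ae_of_all _ fun t ht => ?_
          rw [Set.uIoc_of_le zero_le_one] at ht
          have hx' := hcball x hx
          rw [norm_mul, Complex.norm_real, Real.norm_eq_abs, abs_of_pos ht.1]
          have hb := hB (x * (t:ℂ)) (hcball _ (hmulmem x hx' t ⟨ht.1.le, ht.2⟩))
          have hzt : ‖x * (t:ℂ)‖ = ‖x‖ * t := by
            rw [norm_mul, Complex.norm_real, Real.norm_eq_abs, abs_of_pos ht.1]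
          rw [hzt] at hb
          nlinarith [norm_nonneg (q n (x * (t:ℂ)) - 1), norm_nonneg x, ht.1, ht.2,
            mul_nonneg hM.le (norm_nonneg x)]
        · refine MeasureTheory.ae_of_all _ fun t ht => ?_
          rw [Set.uIoc_of_le zero_le_one] at ht
          have hmt : ∀ x ∈ Metric.closedBall (0:ℂ) ε, x * (t:ℂ) ∈ Metric.closedBall (0:ℂ) ε :=
            fun x hx => hmulmem x (hcball x hx) t ⟨ht.1.le, ht.2⟩
          refine ContinuousWithinAt.mul continuousWithinAt_const ?_
          refine ContinuousWithinAt.sub ?_ continuousWithinAt_const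
          exact ContinuousWithinAt.comp (hC _ (hmt z₀ hz₀))
            ((continuous_mul_right ((t:ℝ):ℂ)).continuousWithinAt) hmt
      -- continuity of F and q (n+1)
      have hFcont : ContinuousOn F (Metric.closedBall (0:ℂ) ε) := by
        rw [hF]
        refine continuousOn_const.add (ContinuousOn.add (ContinuousOn.sub
          (continuousOn_const.mul hIcont) (continuousOn_const.mul continuousOn_id)) ?_)
        exact ContinuousOn.div_const ((continuous_pow 2).continuousOn) 2
      have hCnext : ContinuousOn (q (n+1)) (Metric.closedBall (0:ℂ) ε) := by
        refine ContinuousOn.congr (f := fun z => F z ^ ((1:ℂ)/2)) ?_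
          (fun z hz => hqrec' z (hcball z hz))
        intro z hz
        exact (continuousAt_cpow_const (hslit z (hcball z hz))).comp_continuousWithinAt
          (hFcont z hz)
      -- differentiability of I on the ball
      have hqdiff : ∀ x ∈ Metric.ball (0:ℂ) ε, DifferentiableAt ℂ (q n) x :=
        fun x hx => (hA x hx).differentiableAt
      have hderiv_cont : ContinuousOn (deriv (q n)) (Metric.ball (0:ℂ) ε) :=
        hA.deriv.continuousOn
      have hIdiff : ∀ z₀ ∈ Metric.ball (0:ℂ) ε, DifferentiableAt ℂ I z₀ := by
        intro z₀ hz₀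
        have hz₀' : ‖z₀‖ < ε := by simpa using hz₀
        set r : ℝ := (‖z₀‖ + ε)/2 with hr
        set δ : ℝ := (ε - ‖z₀‖)/2 with hδ
        have hδpos : 0 < δ := by rw [hδ]; linarith
        have hrε : r < ε := by rw [hr]; linarith
        have hsub : Metric.closedBall (0:ℂ) r ⊆ Metric.ball (0:ℂ) ε :=
          Metric.closedBall_subset_ball hrε
        have hxr : ∀ x ∈ Metric.ball z₀ δ, ‖x‖ ≤ r := by
          intro x hx
          have h4 := mem_ball_iff_norm.mp hx
          calc ‖x‖ = ‖(x - z₀) + z₀‖ := by ring_nf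
            _ ≤ ‖x - z₀‖ + ‖z₀‖ := norm_add_le _ _
            _ ≤ r := by rw [hr]; linarith
        have hxmem : ∀ x ∈ Metric.ball z₀ δ, ∀ t ∈ Icc (0:ℝ) 1,
            x * (t:ℂ) ∈ Metric.closedBall (0:ℂ) r := by
          intro x hx t ht
          simp only [Metric.mem_closedBall, dist_zero_right, norm_mul, Complex.norm_real, Real.norm_eq_abs]
          have habs : |t| ≤ 1 := abs_le.2 ⟨by linarith [ht.1], ht.2⟩
          have h5 := hxr x hx
          have : 0 ≤ r := le_trans (norm_nonneg x) h5
          nlinarith [abs_nonneg t, norm_nonneg x]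
        obtain ⟨C, hCb⟩ := (isCompact_closedBall (0:ℂ) r).exists_bound_of_continuousOn
          (hderiv_cont.mono hsub)
        have hkey := intervalIntegral.hasDerivAt_integral_of_dominated_loc_of_deriv_le
          (F := fun x t => (t:ℂ) * (q n (x * (t:ℂ)) - 1))
          (F' := fun x (t : ℝ) => (t:ℂ) * (deriv (q n) (x * (t:ℂ)) * (t:ℂ)))
          (bound := fun _ => max C 0) (μ := MeasureTheory.volume)
          (a := (0:ℝ)) (b := (1:ℝ)) (x₀ := z₀)
          (Metric.ball_mem_nhds z₀ hδpos) ?_ ?_ ?_ ?_ intervalIntegrable_const ?_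
        · exact hkey.2.differentiableAt
        · filter_upwards [Metric.ball_mem_nhds z₀ hδpos] with x hx
          exact haesm x ((hxr x hx).trans hrε.le)
        · exact hInt z₀ hz₀'.le
        · -- measurability of F' z₀
          have hc : ContinuousOn (fun t:ℝ => (t:ℂ) * (deriv (q n) (z₀ * (t:ℂ)) * (t:ℂ)))
              (Icc (0:ℝ) 1) := by
            have hmt : ∀ t ∈ Icc (0:ℝ) 1, z₀ * (t:ℂ) ∈ Metric.ball (0:ℂ) ε := by
              intro t ht
              simp only [Metric.mem_ball, dist_zero_right, norm_mul, Complex.norm_real, Real.norm_eq_abs]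
              have habs : |t| ≤ 1 := abs_le.2 ⟨by linarith [ht.1], ht.2⟩
              nlinarith [norm_nonneg z₀, abs_nonneg t]
            refine ContinuousOn.mul (Complex.continuous_ofReal.continuousOn) ?_
            refine ContinuousOn.mul ?_ (Complex.continuous_ofReal.continuousOn)
            exact hderiv_cont.comp
              ((continuous_const.mul Complex.continuous_ofReal).continuousOn) hmt
          refine (hc.mono ?_).aestronglyMeasurable measurableSet_uIoc
          rw [Set.uIoc_of_le zero_le_one]
          exact Set.Ioc_subset_Icc_self
        · -- bound on F'
          refine MeasureTheory.ae_of_all _ fun t ht => ?_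
          rw [Set.uIoc_of_le zero_le_one] at ht
          intro x hx
          have hmem := hxmem x hx t ⟨ht.1.le, ht.2⟩
          have hd := hCb _ hmem
          rw [norm_mul, norm_mul, Complex.norm_real, Real.norm_eq_abs, abs_of_pos ht.1]
          have hnn : 0 ≤ ‖deriv (q n) (x * (t:ℂ))‖ := norm_nonneg _
          have h6 : t * (‖deriv (q n) (x * (t:ℂ))‖ * t) ≤ C := by
            nlinarith [mul_le_mul_of_nonneg_left
              (show t*t ≤ 1 by nlinarith [ht.1, ht.2]) hnn, hd]
          exact le_trans h6 (le_max_left C 0)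
        · -- differentiability
          refine MeasureTheory.ae_of_all _ fun t ht => ?_
          rw [Set.uIoc_of_le zero_le_one] at ht
          intro x hx
          have hmem : x * (t:ℂ) ∈ Metric.ball (0:ℂ) ε := hsub (hxmem x hx t ⟨ht.1.le, ht.2⟩)
          have hd : DifferentiableAt ℂ (q n) (x * (t:ℂ)) := hqdiff _ hmem
          have h1' : HasDerivAt (fun y : ℂ => y * (t:ℂ)) ((t:ℝ):ℂ) x := by
            simpa using (hasDerivAt_id x).mul_const ((t:ℝ):ℂ)
          have h2' : HasDerivAt (q n) (deriv (q n) (x * (t:ℂ))) (x * (t:ℂ)) := hd.hasDerivAt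
          have h3' := h2'.comp x h1'
          have h4' := (h3'.sub_const 1).const_mul ((t:ℝ):ℂ)
          exact h4'
      have hIanalytic : AnalyticOnNhd ℂ I (Metric.ball (0:ℂ) ε) :=
        DifferentiableOn.analyticOnNhd
          (fun z hz => (hIdiff z hz).differentiableWithinAt) Metric.isOpen_ball
      have hFanalytic : AnalyticOnNhd ℂ F (Metric.ball (0:ℂ) ε) := by
        rw [hF]
        intro z hz
        refine analyticAt_const.add (AnalyticAt.add (AnalyticAt.sub
          (analyticAt_const.mul (hIanalytic z hz))
          (analyticAt_const.mul analyticAt_id)) ?_)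
        exact (analyticAt_id.pow 2).div analyticAt_const (by norm_num)
      have hAnext : AnalyticOnNhd ℂ (q (n+1)) (Metric.ball (0:ℂ) ε) := by
        intro z hz
        have hz' : ‖z‖ ≤ ε := by
          have : ‖z‖ < ε := by simpa using hz
          exact this.le
        have ha : AnalyticAt ℂ (fun w => F w ^ ((1:ℂ)/2)) z :=
          (hFanalytic z hz).cpow analyticAt_const (hslit z hz')
        refine ha.congr ?_
        filter_upwards [Metric.isOpen_ball.mem_nhds hz] with w hw
        exact (hqrec' w (by simpa using Metric.ball_subset_closedBall hw : ‖w‖ ≤ ε)).symm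
      exact ⟨hAnext, hCnext, hBnext⟩
  refine ⟨fun n => ⟨(key n).1, (key n).2.1⟩, fun n _ z hz => ⟨(key n).2.2 z hz, hMz1 z hz⟩⟩
end

section
/- Define b₁ = −1, b₂ = 3/4, b₃ = 1/40, and b_n = (1/(n+2)) Σ_{k=2}^{n−1} k b_k b_{n−k+1} for n ≥ 4. Then b_n > 0 for all n ≥ 2. -/
theorem stmt_12 (b : ℕ → ℝ)
    (hb1 : b 1 = -1) (hb2 : b 2 = 3 / 4) (hb3 : b 3 = 1 / 40)
    (hbn : ∀ n : ℕ, 4 ≤ n →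
      b n = (1 / ((n : ℝ) + 2)) * ∑ k ∈ Finset.Icc 2 (n - 1),
        (k : ℝ) * b k * b (n - k + 1)) :
    ∀ n : ℕ, 2 ≤ n → 0 < b n := by
  intro n
  induction n using Nat.strong_induction_on with
  | _ n ih =>
    intro hn
    by_cases h4 : n < 4
    · interval_cases n <;> simp [hb2, hb3] <;> norm_num
    · push_neg at h4
      rw [hbn n h4]
      have hpos : 0 < (1 : ℝ) / ((n : ℝ) + 2) := by positivity
      apply mul_pos hpos
      apply Finset.sum_pos
      · intro k hk
        rw [Finset.mem_Icc] at hk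
        obtain ⟨hk2, hkn⟩ := hk
        have h1 : 0 < b k := ih k (by omega) hk2
        have h2 : 0 < b (n - k + 1) := ih (n - k + 1) (by omega) (by omega)
        have hk0 : (0 : ℝ) < (k : ℝ) := by exact_mod_cast (by omega : 0 < k)
        exact mul_pos (mul_pos hk0 h1) h2
      · exact ⟨2, by rw [Finset.mem_Icc]; omega⟩
end
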